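/- Suppose every edge of G is dominated and every edge of M is tight (with respect to y, 𝓑 and z). Then an augmenting path P with free endpoints f₁ and f₂ satisfies w(P) = y(f₁) + y(f₂) if and only if every edge of P is tight and, for every B ∈ 𝓑 with z(B) > 0, the set of edges of P lying in γ(B) is either empty or forms a single even-length alternating path having the base vertex of B as an endpoint. -/

import Mathlib

open SimpleGraph

attribute [local instance] Classical.propDecidable

variable {V : Type*}

def IsMatchingSet (G : SimpleGraph V) (M : Finset (Sym2 V)) : Prop :=
  (∀ e ∈ M, e ∈ G.edgeSet) ∧
    ∀ e ∈ M, ∀ f ∈ M, e ≠ f → ∀ v : V, v ∈ e → v ∉ f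

def IsFree (M : Finset (Sym2 V)) (v : V) : Prop := ∀ e ∈ M, v ∉ e

def IsAlternating (M : Finset (Sym2 V)) {G : SimpleGraph V} {u v : V}
    (P : G.Walk u v) : Prop :=
  List.Chain' (fun e f => ¬(e ∈ M ↔ f ∈ M)) P.edges

def IsAugmenting (M : Finset (Sym2 V)) {G : SimpleGraph V} {f₁ f₂ : V}
    (P : G.Walk f₁ f₂) : Prop :=
  P.IsPath ∧ f₁ ≠ f₂ ∧ IsFree M f₁ ∧ IsFree M f₂ ∧ IsAlternating M P

noncomputable def pathWeight (w : Sym2 V → ℝ) (M : Finset (Sym2 V)) {G : SimpleGraph V}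
    {u v : V} (P : G.Walk u v) : ℝ :=
  ((P.edges.filter fun e => e ∉ M).map w).sum -
    ((P.edges.filter fun e => e ∈ M).map w).sum

def InternallyNearMatched (M : Finset (Sym2 V)) (B : Finset V) (b : V) : Prop :=
  b ∈ B ∧ (∀ v ∈ B, s(b, v) ∉ M) ∧
    ∀ v ∈ B, v ≠ b → ∃ u ∈ B, u ≠ v ∧ s(u, v) ∈ M

noncomputable def dualLoad (y : V → ℝ) (𝓑 : Finset (Finset V)) (z : Finset V → ℝ)
    (u v : V) : ℝ :=
  y u + y v + ∑ B ∈ 𝓑.filter (fun B => u ∈ B ∧ v ∈ B), z B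

def Dominated (w : Sym2 V → ℝ) (y : V → ℝ) (𝓑 : Finset (Finset V)) (z : Finset V → ℝ)
    (u v : V) : Prop :=
  w s(u, v) ≤ dualLoad y 𝓑 z u v

def Tight (w : Sym2 V → ℝ) (y : V → ℝ) (𝓑 : Finset (Finset V)) (z : Finset V → ℝ)
    (u v : V) : Prop :=
  w s(u, v) = dualLoad y 𝓑 z u v

/-- The edges of `P` lying in `γ(B)` are either empty or form a single (contiguous)
even-length alternating subpath of `P` having the base vertex `b` as an endpoint. -/
def GammaEdgesSingleEvenAltAtBase (M : Finset (Sym2 V)) {G : SimpleGraph V} {f₁ f₂ : V}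
    (P : G.Walk f₁ f₂) (B : Finset V) (b : V) : Prop :=
  (∀ e ∈ P.edges, ¬ ∀ x ∈ e, x ∈ B) ∨
    ∃ i n : ℕ, 0 < n ∧ Even n ∧ i + n ≤ P.edges.length ∧
      (∀ (j : ℕ) (hj : j < P.edges.length),
        (∀ x ∈ P.edges[j]'hj, x ∈ B) ↔ i ≤ j ∧ j < i + n) ∧
      List.Chain' (fun e f => ¬(e ∈ M ↔ f ∈ M)) ((P.edges.drop i).take n) ∧
      (b = P.getVert i ∨ b = P.getVert (i + n))

/-! Along the augmenting path `f₁ = v₀, …, v_k = f₂` the edge `vⱼvⱼ₊₁` is matched iff `j` is odd,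
and `k` is odd, so `w(P) = ∑ⱼ (-1)ʲ w(vⱼvⱼ₊₁)`. Taking the same alternating sum of the dual loads
telescopes the `y`-terms to `y f₁ + y f₂` and leaves `∑_B z(B) D(B)`, where `D(B) = ∑ (-1)ʲ` over
the edges `vⱼvⱼ₊₁` in `γ(B)`. Hence `y f₁ + y f₂ - w(P)` is a sum of the slacks of the unmatched
edges (matched edges are tight) and of the terms `-z(B) D(B)`, all nonnegative once `D(B) ≤ 0`,
so `w(P) = y f₁ + y f₂` iff all edges of `P` are tight and `D(B) = 0` whenever `z(B) > 0`.

For `D(B) ≤ 0`: a vertex of `B` other than the base is matched inside `B`, so an unmatched edge in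
`γ(B)` before the base is preceded, and one after the base followed, by a matched edge in `γ(B)`;
this injects the positive terms of `D(B)` into the negative ones. When `D(B) = 0` the injection is
onto, which forces the edges in `γ(B)` on either side of the base to form a run of even length
ending at the base; the parity of the base position leaves room for only one such run. -/

open Finset

lemma sum_neg_one_pow_eq_neg_card_sdiff_image {A : Finset ℕ} {g : ℕ → ℕ}
    (hg : ∀ j ∈ A, Even j → g j ∈ A ∧ Odd (g j)) (hinj : Set.InjOn g {j | j ∈ A ∧ Even j}) :
    ∑ j ∈ A, (-1 : ℤ) ^ j = -#(A.filter Odd \ (A.filter Even).image g) := by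
  have hsub : (A.filter Even).image g ⊆ A.filter Odd := by
    simp only [subset_iff, mem_image, mem_filter]
    rintro _ ⟨j, hj, rfl⟩
    exact hg j hj.1 hj.2
  have hcard : #((A.filter Even).image g) = #(A.filter Even) :=
    card_image_of_injOn fun a ha b hb => hinj (by simpa using ha) (by simpa using hb)
  have hodd : A.filter (fun j => ¬Even j) = A.filter Odd :=
    filter_congr fun j _ => Nat.not_even_iff_odd
  have heven : ∑ j ∈ A.filter Even, (-1 : ℤ) ^ j = #(A.filter Even) := by
    rw [sum_congr rfl fun j hj => (mem_filter.1 hj).2.neg_one_pow]; simp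
  have hodd' : ∑ j ∈ A.filter Odd, (-1 : ℤ) ^ j = -#(A.filter Odd) := by
    rw [sum_congr rfl fun j hj => (mem_filter.1 hj).2.neg_one_pow]; simp
  rw [card_sdiff_of_subset hsub, hcard, ← sum_filter_add_sum_filter_not A Even, hodd, heven,
    hodd', Nat.cast_sub (hcard ▸ card_le_card hsub)]
  ring

lemma sum_neg_one_pow_eq_neg_card_of_succ_mem {A : Finset ℕ}
    (hA : ∀ j ∈ A, Even j → j + 1 ∈ A) :
    ∑ j ∈ A, (-1 : ℤ) ^ j = -#(A.filter fun j => Odd j ∧ j - 1 ∉ A) := by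
  rw [sum_neg_one_pow_eq_neg_card_sdiff_image (fun j hj he => ⟨hA j hj he, he.add_one⟩)
    (add_left_injective 1).injOn]
  congr 3
  ext j
  simp only [mem_sdiff, mem_filter, mem_image]
  constructor
  · rintro ⟨⟨hj, hodd⟩, hnot⟩
    refine ⟨hj, hodd, fun hmem => hnot ⟨j - 1, ⟨hmem, ?_⟩, ?_⟩⟩ <;>
      grind
  · rintro ⟨hj, hodd, hnot⟩
    refine ⟨⟨hj, hodd⟩, ?_⟩
    rintro ⟨i, ⟨hi, -⟩, rfl⟩
    exact hnot hi

lemma sum_neg_one_pow_eq_neg_card_of_pred_mem {A : Finset ℕ}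
    (hA : ∀ j ∈ A, Even j → 0 < j ∧ j - 1 ∈ A) :
    ∑ j ∈ A, (-1 : ℤ) ^ j = -#(A.filter fun j => Odd j ∧ j + 1 ∉ A) := by
  have hodd : ∀ j ∈ A, Even j → Odd (j - 1) := fun j hj he =>
    Nat.Even.sub_odd (hA j hj he).1 he odd_one
  rw [sum_neg_one_pow_eq_neg_card_sdiff_image (fun j hj he => ⟨(hA j hj he).2, hodd j hj he⟩)
    fun a ha b hb hab => by have := (hA a ha.1 ha.2).1; have := (hA b hb.1 hb.2).1; omega]
  congr 3
  ext j
  simp only [mem_sdiff, mem_filter, mem_image]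
  constructor
  · rintro ⟨⟨hj, hodd⟩, hnot⟩
    refine ⟨hj, hodd, fun hmem => hnot ⟨j + 1, ⟨hmem, hodd.add_one⟩, rfl⟩⟩
  · rintro ⟨hj, hodd, hnot⟩
    refine ⟨⟨hj, hodd⟩, ?_⟩
    rintro ⟨i, ⟨hi, he⟩, rfl⟩
    exact hnot (by rwa [Nat.sub_add_cancel (hA i hi he).1])

lemma sum_Ico_neg_one_pow_of_even (i : ℕ) {n : ℕ} (hn : Even n) :
    ∑ j ∈ Ico i (i + n), (-1 : ℤ) ^ j = 0 := by
  obtain ⟨m, rfl⟩ := hn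
  induction m with
  | zero => simp
  | succ m ih =>
    rw [show i + (m + 1 + (m + 1)) = i + (m + m) + 1 + 1 by ring,
      sum_Ico_succ_top (by omega), sum_Ico_succ_top (by omega), ih, pow_succ]
    ring

/-- Models the indices `j` of the edges `vⱼvⱼ₊₁` of an augmenting path that lie in `γ(B)`, with
`β` the position of the base of `B`: the matched edges at both ends of an unmatched (even) edge
in `γ(B)` lie in `γ(B)` too, except at the base. -/
structure FlankedExceptAt (S : Finset ℕ) (β : ℕ) : Prop where
  pred : ∀ j ∈ S, Even j → j ≠ β → 0 < j ∧ j - 1 ∈ S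
  succ : ∀ j ∈ S, Even j → j + 1 ≠ β → j + 1 ∈ S

namespace FlankedExceptAt

variable {S : Finset ℕ} {β : ℕ}

lemma filter_lt (h : FlankedExceptAt S β) : FlankedExceptAt (S.filter (· < β)) β where
  pred j hj he hβ := by
    rw [mem_filter] at hj ⊢
    obtain ⟨hpos, hmem⟩ := h.pred j hj.1 he hβ
    exact ⟨hpos, hmem, by omega⟩
  succ j hj he hβ := by
    rw [mem_filter] at hj ⊢
    exact ⟨h.succ j hj.1 he hβ, by omega⟩

lemma filter_not_lt (h : FlankedExceptAt S β) : FlankedExceptAt (S.filter (¬· < β)) β where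
  pred j hj he hβ := by
    rw [mem_filter] at hj ⊢
    obtain ⟨hpos, hmem⟩ := h.pred j hj.1 he hβ
    exact ⟨hpos, hmem, by omega⟩
  succ j hj he hβ := by
    rw [mem_filter] at hj ⊢
    exact ⟨h.succ j hj.1 he hβ, by omega⟩

lemma pred_mem_of_forall_lt (h : FlankedExceptAt S β) (hlt : ∀ j ∈ S, j < β) :
    ∀ j ∈ S, Even j → 0 < j ∧ j - 1 ∈ S :=
  fun j hj he => h.pred j hj he (hlt j hj).ne

lemma succ_mem_of_forall_le (h : FlankedExceptAt S β) (hle : ∀ j ∈ S, β ≤ j) :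
    ∀ j ∈ S, Even j → j + 1 ∈ S :=
  fun j hj he => h.succ j hj he (by have := hle j hj; omega)

lemma sum_nonpos_of_forall_lt (h : FlankedExceptAt S β) (hlt : ∀ j ∈ S, j < β) :
    ∑ j ∈ S, (-1 : ℤ) ^ j ≤ 0 := by
  rw [sum_neg_one_pow_eq_neg_card_of_pred_mem (h.pred_mem_of_forall_lt hlt)]
  omega

lemma sum_nonpos_of_forall_le (h : FlankedExceptAt S β) (hle : ∀ j ∈ S, β ≤ j) :
    ∑ j ∈ S, (-1 : ℤ) ^ j ≤ 0 := by
  rw [sum_neg_one_pow_eq_neg_card_of_succ_mem (h.succ_mem_of_forall_le hle)]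
  omega

lemma eq_Ico_of_forall_lt (h : FlankedExceptAt S β) (hlt : ∀ j ∈ S, j < β)
    (h0 : ∑ j ∈ S, (-1 : ℤ) ^ j = 0) :
    S = ∅ ∨ Odd β ∧ ∃ i n, 0 < n ∧ Even n ∧ i + n = β ∧ S = Ico i (i + n) := by
  rw [sum_neg_one_pow_eq_neg_card_of_pred_mem (h.pred_mem_of_forall_lt hlt), neg_eq_zero,
    Nat.cast_eq_zero, card_eq_zero, filter_eq_empty_iff] at h0
  have hodd : ∀ j ∈ S, Odd j → j + 1 ∈ S := fun j hj ho => not_not.1 fun hn => h0 hj ⟨ho, hn⟩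
  rcases S.eq_empty_or_nonempty with hS | hne
  · exact Or.inl hS
  right
  set i := S.min' hne
  have hi : i ∈ S := min'_mem S hne
  have hsucc : ∀ j ∈ S, j + 1 < β → j + 1 ∈ S := fun j hj hjβ =>
    (Nat.even_or_odd j).elim (fun he => h.succ j hj he hjβ.ne) (hodd j hj)
  have hIco : ∀ j, i ≤ j → j < β → j ∈ S := by
    intro j hij
    induction j, hij using Nat.le_induction with
    | base => exact fun _ => hi
    | succ j _ ih => exact fun hj => hsucc j (ih (by omega)) hj
  have hi_odd : Odd i := by
    refine Nat.not_even_iff_odd.1 fun he => ?_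
    obtain ⟨hpos, hmem⟩ := h.pred_mem_of_forall_lt hlt i hi he
    have := min'_le S _ hmem
    omega
  have hiβ := hlt i hi
  have hβ_odd : Odd β := by
    have hlast := hIco (β - 1) (by omega) (by omega)
    have : Even (β - 1) := Nat.not_odd_iff_even.1 fun ho => by
      have := hlt _ (hodd _ hlast ho)
      omega
    rw [← Nat.sub_add_cancel (show 1 ≤ β by omega)]
    exact this.add_one
  refine ⟨hβ_odd, i, β - i, by omega, Nat.Odd.sub_odd hβ_odd hi_odd, by omega, ?_⟩
  ext j
  rw [mem_Ico, Nat.add_sub_cancel' hiβ.le]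
  exact ⟨fun hj => ⟨min'_le S j hj, hlt j hj⟩, fun hj => hIco j hj.1 hj.2⟩

lemma eq_Ico_of_forall_le (h : FlankedExceptAt S β) (hle : ∀ j ∈ S, β ≤ j)
    (h0 : ∑ j ∈ S, (-1 : ℤ) ^ j = 0) :
    S = ∅ ∨ Even β ∧ ∃ n, 0 < n ∧ Even n ∧ S = Ico β (β + n) := by
  rw [sum_neg_one_pow_eq_neg_card_of_succ_mem (h.succ_mem_of_forall_le hle), neg_eq_zero,
    Nat.cast_eq_zero, card_eq_zero, filter_eq_empty_iff] at h0
  have hodd : ∀ j ∈ S, Odd j → j - 1 ∈ S := fun j hj ho => not_not.1 fun hn => h0 hj ⟨ho, hn⟩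
  rcases S.eq_empty_or_nonempty with hS | hne
  · exact Or.inl hS
  right
  set t := S.max' hne
  have ht : t ∈ S := max'_mem S hne
  have hpred : ∀ j ∈ S, β < j → j - 1 ∈ S := fun j hj hβj =>
    (Nat.even_or_odd j).elim (fun he => (h.pred j hj he hβj.ne').2) (hodd j hj)
  have hIcc : ∀ j, j ≤ t → β ≤ j → j ∈ S := by
    intro j hjt
    induction hjt using Nat.decreasingInduction with
    | self => exact fun _ => ht
    | of_succ j _ ih => exact fun hβj => hpred (j + 1) (ih (by omega)) (by omega)
  have hβt := hle t ht
  have hβ_even : Even β := Nat.not_odd_iff_even.1 fun ho => by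
    have := hle _ (hodd β (hIcc β hβt le_rfl) ho)
    have := ho.pos
    omega
  have ht_odd : Odd t := Nat.not_even_iff_odd.1 fun he => by
    have := le_max' S _ (h.succ_mem_of_forall_le hle t ht he)
    omega
  refine ⟨hβ_even, t + 1 - β, by omega, (Nat.even_sub (by omega)).2 (by
    simp [ht_odd.add_one, hβ_even]), ?_⟩
  ext j
  rw [mem_Ico, Nat.add_sub_cancel' (by omega)]
  exact ⟨fun hj => ⟨hle j hj, Nat.lt_succ_of_le (le_max' S j hj)⟩,
    fun hj => hIcc j (by omega) hj.1⟩

theorem sum_nonpos (h : FlankedExceptAt S β) : ∑ j ∈ S, (-1 : ℤ) ^ j ≤ 0 := by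
  rw [← sum_filter_add_sum_filter_not S (· < β)]
  exact add_nonpos (h.filter_lt.sum_nonpos_of_forall_lt fun j hj => (mem_filter.1 hj).2)
    (h.filter_not_lt.sum_nonpos_of_forall_le fun j hj => not_lt.1 (mem_filter.1 hj).2)

theorem eq_Ico_of_sum_eq_zero (h : FlankedExceptAt S β) (h0 : ∑ j ∈ S, (-1 : ℤ) ^ j = 0) :
    S = ∅ ∨ ∃ i n, 0 < n ∧ Even n ∧ S = Ico i (i + n) ∧ (β = i ∨ β = i + n) := by
  have hlt : ∀ j ∈ S.filter (· < β), j < β := fun j hj => (mem_filter.1 hj).2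
  have hle : ∀ j ∈ S.filter (¬· < β), β ≤ j := fun j hj => not_lt.1 (mem_filter.1 hj).2
  have hL := h.filter_lt.sum_nonpos_of_forall_lt hlt
  have hR := h.filter_not_lt.sum_nonpos_of_forall_le hle
  rw [← sum_filter_add_sum_filter_not S (· < β)] at h0
  rw [← filter_union_filter_not_eq (· < β) S]
  rcases h.filter_lt.eq_Ico_of_forall_lt hlt (by linarith) with
      hL0 | ⟨hβL, i, n, hn, hev, hin, hL⟩ <;>
    rcases h.filter_not_lt.eq_Ico_of_forall_le hle (by linarith) with
      hR0 | ⟨hβR, m, hm, hevm, hR⟩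
  · exact Or.inl (by rw [hL0, hR0, union_empty])
  · exact Or.inr ⟨β, m, hm, hevm, by rw [hL0, hR, empty_union], Or.inl rfl⟩
  · exact Or.inr ⟨i, n, hn, hev, by rw [hL, hR0, union_empty], Or.inr hin.symm⟩
  · exact absurd hβR (Nat.not_even_iff_odd.2 hβL)

end FlankedExceptAt

lemma IsMatchingSet.eq_of_mem {G : SimpleGraph V} {M : Finset (Sym2 V)} (hM : IsMatchingSet G M)
    {e f : Sym2 V} (he : e ∈ M) (hf : f ∈ M) {v : V} (hve : v ∈ e) (hvf : v ∈ f) : e = f :=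
  by_contra fun hne => hM.2 e he f hf hne v hve hvf

lemma Tight.symm {w : Sym2 V → ℝ} {y : V → ℝ} {𝓑 : Finset (Finset V)} {z : Finset V → ℝ}
    {u v : V} (h : Tight w y 𝓑 z u v) : Tight w y 𝓑 z v u := by
  unfold Tight dualLoad at *
  rw [Sym2.eq_swap, h, filter_congr fun B _ => and_comm]
  ring

section AugmentingPath

variable {G : SimpleGraph V} {M : Finset (Sym2 V)} {u v : V}

lemma IsAlternating.mem_iff_odd {P : G.Walk u v} (hP : IsAlternating M P) (hu : IsFree M u) :
    ∀ j < P.length, s(P.getVert j, P.getVert (j + 1)) ∈ M ↔ Odd j := by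
  intro j hj
  induction j with
  | zero => simpa using fun hM => hu _ hM (Sym2.mem_mk_left _ _)
  | succ j ih =>
    have halt := List.isChain_iff_getElem.1 hP j (by simpa using hj)
    simp only [Walk.getElem_edges] at halt
    rw [Nat.odd_add_one, ← ih (by omega)]
    tauto

lemma IsAugmenting.mem_iff_odd {P : G.Walk u v} (hP : IsAugmenting M P) :
    ∀ j < P.length, s(P.getVert j, P.getVert (j + 1)) ∈ M ↔ Odd j :=
  let ⟨_, _, hu, _, halt⟩ := hP
  halt.mem_iff_odd hu

lemma IsAugmenting.odd_length {P : G.Walk u v} (hP : IsAugmenting M P) : Odd P.length := by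
  have ⟨_, hne, _, hv, _⟩ := hP
  have hpos : 0 < P.length := Nat.pos_of_ne_zero fun h => hne (Walk.eq_of_length_eq_zero h)
  have hlast := hP.mem_iff_odd (P.length - 1) (by omega)
  rw [Nat.sub_add_cancel hpos, Walk.getVert_length] at hlast
  have heven : Even (P.length - 1) := Nat.not_odd_iff_even.1 fun ho =>
    hv _ (hlast.2 ho) (Sym2.mem_mk_right _ _)
  obtain ⟨m, hm⟩ := heven
  exact ⟨m, by omega⟩

lemma IsAugmenting.eq_getVert_succ_of_odd (hM : IsMatchingSet G M) {P : G.Walk u v}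
    (hP : IsAugmenting M P) {j : ℕ} (hj : Odd j) (hjk : j ≤ P.length) {x : V}
    (hx : s(x, P.getVert j) ∈ M) : j < P.length ∧ x = P.getVert (j + 1) := by
  have ⟨_, _, _, hv, _⟩ := hP
  have hlt : j < P.length := lt_of_le_of_ne hjk fun h => by
    rw [h, Walk.getVert_length] at hx
    exact hv _ hx (Sym2.mem_mk_right _ _)
  have hedge := hM.eq_of_mem ((hP.mem_iff_odd j hlt).2 hj) hx (Sym2.mem_mk_left _ _)
    (Sym2.mem_mk_right _ _)
  exact ⟨hlt, (Sym2.congr_left.1 (Sym2.eq_swap.symm.trans hedge)).symm⟩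

lemma IsAugmenting.eq_getVert_pred_of_even (hM : IsMatchingSet G M) {P : G.Walk u v}
    (hP : IsAugmenting M P) {j : ℕ} (hj : Even j) (hjk : j ≤ P.length) {x : V}
    (hx : s(x, P.getVert j) ∈ M) : 0 < j ∧ x = P.getVert (j - 1) := by
  have ⟨_, _, hu, _, _⟩ := hP
  have hpos : 0 < j := Nat.pos_of_ne_zero fun h => by
    rw [h, Walk.getVert_zero] at hx
    exact hu _ hx (Sym2.mem_mk_right _ _)
  have hmem := (hP.mem_iff_odd (j - 1) (by omega)).2 (Nat.Even.sub_odd hpos hj odd_one)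
  rw [Nat.sub_add_cancel hpos] at hmem
  exact ⟨hpos, (Sym2.congr_left.1 (hM.eq_of_mem hmem hx (Sym2.mem_mk_right _ _)
    (Sym2.mem_mk_right _ _))).symm⟩

noncomputable def gammaIndices (P : G.Walk u v) (B : Finset V) : Finset ℕ :=
  (range P.length).filter fun j => P.getVert j ∈ B ∧ P.getVert (j + 1) ∈ B

lemma mem_gammaIndices_iff_getElem_edges {P : G.Walk u v} {B : Finset V} {j : ℕ}
    (hj : j < P.edges.length) : j ∈ gammaIndices P B ↔ ∀ x ∈ P.edges[j], x ∈ B := by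
  rw [Walk.getElem_edges, Sym2.ball, gammaIndices, mem_filter, mem_range, Walk.length_edges] at *
  exact and_iff_right hj

lemma SimpleGraph.Walk.IsPath.getVert_ne_of_ne_idxOf {P : G.Walk u v} (hP : P.IsPath) {j : ℕ}
    (hj : j ≤ P.length) {b : V} (hb : j ≠ P.support.idxOf b) : P.getVert j ≠ b := by
  rintro rfl
  have hmem := P.getVert_mem_support j
  refine hb (hP.getVert_injOn hj ?_ (P.getVert_support_idxOf hmem).symm)
  have := List.idxOf_lt_length_iff.2 hmem
  simp only [Walk.length_support, Set.mem_ofPred_eq] at this ⊢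
  omega

lemma SimpleGraph.Walk.getVert_idxOf_of_le {P : G.Walk u v} {b : V}
    (hb : P.support.idxOf b ≤ P.length) :
    P.getVert (P.support.idxOf b) = b :=
  P.getVert_support_idxOf (List.idxOf_lt_length_iff.1 (by simpa using Nat.lt_succ_of_le hb))

lemma add_le_length_of_gammaIndices_eq_Ico {P : G.Walk u v} {B : Finset V} {i n : ℕ}
    (hn : 0 < n) (hS : gammaIndices P B = Ico i (i + n)) : i + n ≤ P.length := by
  have := (mem_filter.1 (hS ▸ mem_Ico.2 ⟨by omega, by omega⟩ : i + n - 1 ∈ gammaIndices P B)).1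
  rw [mem_range] at this
  omega

lemma IsAugmenting.flankedExceptAt_gammaIndices (hM : IsMatchingSet G M) {P : G.Walk u v}
    (hP : IsAugmenting M P) {B : Finset V} {b : V} (hB : InternallyNearMatched M B b) :
    FlankedExceptAt (gammaIndices P B) (P.support.idxOf b) where
  pred j hj he hjb := by
    simp only [gammaIndices, mem_filter, mem_range] at hj ⊢
    obtain ⟨x, hxB, -, hx⟩ := hB.2.2 _ hj.2.1 (hP.1.getVert_ne_of_ne_idxOf hj.1.le hjb)
    obtain ⟨hpos, rfl⟩ := hP.eq_getVert_pred_of_even hM he hj.1.le hx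
    exact ⟨hpos, by omega, hxB, by rw [Nat.sub_add_cancel hpos]; exact hj.2.1⟩
  succ j hj he hjb := by
    simp only [gammaIndices, mem_filter, mem_range] at hj ⊢
    obtain ⟨x, hxB, -, hx⟩ := hB.2.2 _ hj.2.2 (hP.1.getVert_ne_of_ne_idxOf hj.1 hjb)
    obtain ⟨hlt, rfl⟩ := hP.eq_getVert_succ_of_odd hM he.add_one hj.1 hx
    exact ⟨hlt, hj.2.2, hxB⟩

lemma IsAlternating.gammaEdgesSingleEvenAltAtBase_iff {P : G.Walk u v} (hP : IsAlternating M P)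
    (B : Finset V) (b : V) :
    GammaEdgesSingleEvenAltAtBase M P B b ↔ gammaIndices P B = ∅ ∨
      ∃ i n, 0 < n ∧ Even n ∧ gammaIndices P B = Ico i (i + n) ∧
        (b = P.getVert i ∨ b = P.getVert (i + n)) := by
  have hsub : gammaIndices P B ⊆ range P.edges.length :=
    P.length_edges ▸ filter_subset _ _
  refine or_congr ?_ ⟨?_, ?_⟩
  · rw [eq_empty_iff_forall_notMem]
    constructor
    · intro h j hj
      have hj' := mem_range.1 (hsub hj)
      exact h _ (List.getElem_mem hj') ((mem_gammaIndices_iff_getElem_edges hj').1 hj)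
    · intro h e he
      obtain ⟨j, hj, rfl⟩ := List.getElem_of_mem he
      exact fun hB => h j ((mem_gammaIndices_iff_getElem_edges hj).2 hB)
  · rintro ⟨i, n, hn, hev, hle, hiff, -, hb⟩
    refine ⟨i, n, hn, hev, ?_, hb⟩
    ext j
    rw [mem_Ico]
    by_cases hj : j < P.edges.length
    · rw [mem_gammaIndices_iff_getElem_edges hj, hiff j hj]
    · exact iff_of_false (fun h => hj (mem_range.1 (hsub h))) (by omega)
  · rintro ⟨i, n, hn, hev, hS, hb⟩
    refine ⟨i, n, hn, hev, P.length_edges ▸ add_le_length_of_gammaIndices_eq_Ico hn hS,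
      fun j hj => ?_, (hP.drop i).take n, hb⟩
    rw [← mem_gammaIndices_iff_getElem_edges hj, hS, mem_Ico]

theorem IsAugmenting.sum_gammaIndices_eq_zero_iff (hM : IsMatchingSet G M) {P : G.Walk u v}
    (hP : IsAugmenting M P) {B : Finset V} {b : V} (hB : InternallyNearMatched M B b) :
    ∑ j ∈ gammaIndices P B, (-1 : ℤ) ^ j = 0 ↔ GammaEdgesSingleEvenAltAtBase M P B b := by
  have ⟨_, _, _, _, halt⟩ := hP
  rw [halt.gammaEdgesSingleEvenAltAtBase_iff]
  constructor
  · intro h0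
    refine ((hP.flankedExceptAt_gammaIndices hM hB).eq_Ico_of_sum_eq_zero h0).imp_right ?_
    rintro ⟨i, n, hn, hev, hS, hβ⟩
    have hle := add_le_length_of_gammaIndices_eq_Ico hn hS
    refine ⟨i, n, hn, hev, hS, hβ.imp (fun h => ?_) (fun h => ?_)⟩
    · rw [← h, Walk.getVert_idxOf_of_le (h ▸ by omega)]
    · rw [← h, Walk.getVert_idxOf_of_le (h ▸ hle)]
  · rintro (h | ⟨i, n, -, hev, hS, -⟩)
    · rw [h, sum_empty]
    · rw [hS, sum_Ico_neg_one_pow_of_even i hev]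

lemma SimpleGraph.Walk.sum_map_edges {R : Type*} [AddCommMonoid R] (P : G.Walk u v)
    (f : Sym2 V → R) :
    (P.edges.map f).sum = ∑ j ∈ range P.length, f s(P.getVert j, P.getVert (j + 1)) := by
  rw [← Fin.sum_univ_fun_getElem, ← P.length_edges,
    ← Fin.sum_univ_eq_sum_range (fun j => f s(P.getVert j, P.getVert (j + 1)))]
  exact sum_congr rfl fun j _ => by rw [Walk.getElem_edges]

lemma pathWeight_eq_sum_map_edges (w : Sym2 V → ℝ) (M : Finset (Sym2 V)) (P : G.Walk u v) :
    pathWeight w M P = (P.edges.map fun e => if e ∈ M then -w e else w e).sum := by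
  unfold pathWeight
  induction P.edges with
  | nil => simp
  | cons e l ih => by_cases he : e ∈ M <;> simp [he, ← ih] <;> ring

lemma IsAugmenting.pathWeight_eq (w : Sym2 V → ℝ) {P : G.Walk u v} (hP : IsAugmenting M P) :
    pathWeight w M P = ∑ j ∈ range P.length, (-1) ^ j * w s(P.getVert j, P.getVert (j + 1)) := by
  rw [pathWeight_eq_sum_map_edges, P.sum_map_edges]
  refine sum_congr rfl fun j hj => ?_
  have hpar := hP.mem_iff_odd j (mem_range.1 hj)
  rcases Nat.even_or_odd j with he | ho
  · rw [if_neg (hpar.not.2 (Nat.not_odd_iff_even.2 he)), he.neg_one_pow, one_mul]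
  · rw [if_pos (hpar.2 ho), ho.neg_one_pow, neg_one_mul]

lemma SimpleGraph.Walk.sum_neg_one_pow_mul_dualLoad (P : G.Walk u v) (y : V → ℝ)
    (𝓑 : Finset (Finset V)) (z : Finset V → ℝ) :
    ∑ j ∈ range P.length, (-1) ^ j * dualLoad y 𝓑 z (P.getVert j) (P.getVert (j + 1)) =
      y u - (-1) ^ P.length * y v +
        ∑ B ∈ 𝓑, z B * ((∑ j ∈ gammaIndices P B, (-1 : ℤ) ^ j : ℤ) : ℝ) := by
  simp only [dualLoad, mul_add, sum_add_distrib]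
  congr 1
  · have := sum_range_sub' (fun j => (-1 : ℝ) ^ j * y (P.getVert j)) P.length
    simp only [pow_zero, one_mul, Walk.getVert_zero, Walk.getVert_length] at this
    rw [← sum_add_distrib, ← this]
    exact sum_congr rfl fun j _ => by ring
  · push_cast
    simp only [gammaIndices, sum_filter, mul_sum, mul_ite, mul_zero]
    rw [sum_comm]
    exact sum_congr rfl fun B _ => sum_congr rfl fun j _ => by simp only [mul_comm]

end AugmentingPath

section Duality

variable {G : SimpleGraph V} {M : Finset (Sym2 V)} {w : Sym2 V → ℝ} {y : V → ℝ}
  {𝓑 : Finset (Finset V)} {z : Finset V → ℝ} {u v : V}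

lemma SimpleGraph.Walk.forall_tight_iff (P : G.Walk u v) :
    (∀ a b : V, s(a, b) ∈ P.edges → Tight w y 𝓑 z a b) ↔
      ∀ j < P.length, Tight w y 𝓑 z (P.getVert j) (P.getVert (j + 1)) := by
  refine ⟨fun h j hj => h _ _ (P.mk_mem_edges_iff_exists.2 ⟨j, hj, rfl⟩), fun h a b hab => ?_⟩
  obtain ⟨j, hj, he⟩ := P.mk_mem_edges_iff_exists.1 hab
  rcases Sym2.eq_iff.1 he with ⟨rfl, rfl⟩ | ⟨rfl, rfl⟩
  exacts [h j hj, (h j hj).symm]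

lemma IsAugmenting.add_sub_pathWeight {P : G.Walk u v} (hP : IsAugmenting M P) :
    y u + y v - pathWeight w M P =
      ∑ j ∈ range P.length, (-1) ^ j *
          (dualLoad y 𝓑 z (P.getVert j) (P.getVert (j + 1)) - w s(P.getVert j, P.getVert (j + 1))) +
        ∑ B ∈ 𝓑, z B * -((∑ j ∈ gammaIndices P B, (-1 : ℤ) ^ j : ℤ) : ℝ) := by
  have hdual := P.sum_neg_one_pow_mul_dualLoad y 𝓑 z
  rw [hP.odd_length.neg_one_pow] at hdual
  simp only [hP.pathWeight_eq, mul_sub, sum_sub_distrib, mul_neg, sum_neg_distrib]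
  linarith

lemma IsAugmenting.neg_one_pow_mul_slack_nonneg {P : G.Walk u v} (hP : IsAugmenting M P)
    (hdom : ∀ a b : V, G.Adj a b → Dominated w y 𝓑 z a b)
    (htight : ∀ a b : V, s(a, b) ∈ M → Tight w y 𝓑 z a b) :
    ∀ j ∈ range P.length, 0 ≤ (-1 : ℝ) ^ j *
      (dualLoad y 𝓑 z (P.getVert j) (P.getVert (j + 1)) - w s(P.getVert j, P.getVert (j + 1))) := by
  intro j hj
  rcases Nat.even_or_odd j with he | ho
  · rw [he.neg_one_pow, one_mul, sub_nonneg]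
    exact hdom _ _ (P.adj_getVert_succ (mem_range.1 hj))
  · rw [htight _ _ ((hP.mem_iff_odd j (mem_range.1 hj)).2 ho), sub_self, mul_zero]

end Duality

theorem max_weight_augmenting_path_characterization
    {V : Type*} (G : SimpleGraph V) (M : Finset (Sym2 V))
    (w : Sym2 V → ℝ) (y : V → ℝ) (𝓑 : Finset (Finset V)) (z : Finset V → ℝ)
    (base : Finset V → V)
    (hM : IsMatchingSet G M)
    (h𝓑 : ∀ B ∈ 𝓑, InternallyNearMatched M B (base B))
    (hz : ∀ B ∈ 𝓑, 0 ≤ z B)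
    (hdom : ∀ u v : V, G.Adj u v → Dominated w y 𝓑 z u v)
    (htight : ∀ u v : V, s(u, v) ∈ M → Tight w y 𝓑 z u v)
    {f₁ f₂ : V} (P : G.Walk f₁ f₂) (hP : IsAugmenting M P) :
    pathWeight w M P = y f₁ + y f₂ ↔
      ((∀ u v : V, s(u, v) ∈ P.edges → Tight w y 𝓑 z u v) ∧
        ∀ B ∈ 𝓑, 0 < z B → GammaEdgesSingleEvenAltAtBase M P B (base B)) := by
  have hslack := hP.neg_one_pow_mul_slack_nonneg hdom htight
  have hblossom : ∀ B ∈ 𝓑, 0 ≤ z B * -((∑ j ∈ gammaIndices P B, (-1 : ℤ) ^ j : ℤ) : ℝ) :=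
    fun B hB => mul_nonneg (hz B hB) (neg_nonneg.2 (Int.cast_nonpos.2
      (hP.flankedExceptAt_gammaIndices hM (h𝓑 B hB)).sum_nonpos))
  rw [eq_comm, ← sub_eq_zero, hP.add_sub_pathWeight, add_eq_zero_iff_of_nonneg
    (sum_nonneg hslack) (sum_nonneg hblossom), sum_eq_zero_iff_of_nonneg hslack,
    sum_eq_zero_iff_of_nonneg hblossom, P.forall_tight_iff]
  refine and_congr (forall_congr' fun j => ?_) (forall₂_congr fun B hB => ?_)
  · rw [mem_range, mul_eq_zero, sub_eq_zero, or_iff_right (pow_ne_zero j (by norm_num))]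
    exact imp_congr_right fun _ => eq_comm
  · rw [← hP.sum_gammaIndices_eq_zero_iff hM (h𝓑 B hB), mul_eq_zero, neg_eq_zero,
      Int.cast_eq_zero]
    exact ⟨fun h hpos => h.resolve_left hpos.ne', fun h =>
      (hz B hB).eq_or_lt.elim (Or.inl ∘ Eq.symm) (Or.inr ∘ h)⟩
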